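/- arXiv:2412.20216 — 2 statements merged into one kernel-verified Lean document; each statement's English description precedes it below -/
import Mathlib

section
/- (Uniform Lipschitz continuity of Picard iterates in the initial condition and parameters.) For every u ∈ C_a, every n ∈ ℕ, all x₁, x₂ ∈ X and all θ₁, θ₂ ∈ Θ: sup_{t∈[0,T]} ‖(P_{t₀,x₁,θ₁}^n u)(t) − (P_{t₀,x₂,θ₂}^n u)(t)‖₂ ≤ (‖x₁ − x₂‖₂ + T·K_θ·‖θ₁ − θ₂‖₂) / (1 − T·K_x). In particular, for fixed u the function (t,x,θ) ↦ (P_{t₀,x,θ}^n u)(t) is Lipschitz in x with constant 1/(1−T·K_x) and Lipschitz in θ with constant T·K_θ/(1−T·K_x), uniformly in n. -/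
open Set MeasureTheory Filter Topology Metric

noncomputable section

/-- Euclidean space `ℝ^n`. -/
abbrev Euc (n : ℕ) : Type := EuclideanSpace ℝ (Fin n)

/-- The Picard operator `(P_{t₀,x,θ} u)(t) = x + ∫₀ᵗ f(s + t₀, u(s), θ) ds`. -/
noncomputable def picard {nx nθ : ℕ} (f : ℝ → Euc nx → Euc nθ → Euc nx)
    (t₀ : ℝ) (x : Euc nx) (θ : Euc nθ) (u : ℝ → Euc nx) : ℝ → Euc nx :=
  fun t => x + ∫ s in (0:ℝ)..t, f (s + t₀) (u s) θ

/-- Membership in `C_a = {u ∈ C([0,T],ℝ^{nx}) : sup_{t∈[0,T]} ‖u t‖ ≤ a}`. -/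
def InCa {nx : ℕ} (T a : ℝ) (u : ℝ → Euc nx) : Prop :=
  ContinuousOn u (Icc 0 T) ∧ ∀ t ∈ Icc (0:ℝ) T, ‖u t‖ ≤ a

/-- **Uniform Lipschitz continuity of Picard iterates in the initial condition and the
parameters.**  For every `u ∈ C_a`, every `n ∈ ℕ`, all `x₁,x₂ ∈ X`, `θ₁,θ₂ ∈ Θ`:
`sup_{t∈[0,T]} ‖(P^n_{t₀,x₁,θ₁}u)(t) − (P^n_{t₀,x₂,θ₂}u)(t)‖
  ≤ (‖x₁−x₂‖ + T·Kθ·‖θ₁−θ₂‖)/(1 − T·Kx)`. -/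
theorem picard_iterates_lipschitz_in_parameters {nx nθ : ℕ}
    (Γ : Set ℝ) (X : Set (Euc nx)) (Θ : Set (Euc nθ))
    (hΓ : IsCompact Γ) (hX : IsCompact X) (hΘ : IsCompact Θ)
    (t₀ : ℝ) (ht₀ : t₀ ∈ Γ)
    (f : ℝ → Euc nx → Euc nθ → Euc nx)
    (hfc : Continuous fun p : ℝ × Euc nx × Euc nθ => f p.1 p.2.1 p.2.2)
    (a Kx Kθ M T : ℝ)
    (ha : ∀ x ∈ X, 2 * ‖x‖ ≤ a)
    (hKx : ∀ t ∈ Γ, ∀ θ ∈ Θ, ∀ x ∈ closedBall (0 : Euc nx) a, ∀ y ∈ closedBall (0 : Euc nx) a,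
      ‖f t x θ - f t y θ‖ ≤ Kx * ‖x - y‖)
    (hKθ : ∀ t ∈ Γ, ∀ x ∈ closedBall (0 : Euc nx) a, ∀ θ₁ ∈ Θ, ∀ θ₂ ∈ Θ,
      ‖f t x θ₁ - f t x θ₂‖ ≤ Kθ * ‖θ₁ - θ₂‖)
    (hM : ∀ t ∈ Γ, ∀ θ ∈ Θ, ∀ x ∈ closedBall (0 : Euc nx) a, ‖f t x θ‖ ≤ M)
    (hT : 0 < T) (hTK : T * Kx < 1) (hTM : 2 * M * T < a)
    (hsub : Icc t₀ (t₀ + T) ⊆ Γ)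
    (u : ℝ → Euc nx) (hu : InCa T a u) (n : ℕ)
    (x₁ : Euc nx) (hx₁ : x₁ ∈ X) (x₂ : Euc nx) (hx₂ : x₂ ∈ X)
    (θ₁ : Euc nθ) (hθ₁ : θ₁ ∈ Θ) (θ₂ : Euc nθ) (hθ₂ : θ₂ ∈ Θ) :
    ∀ t ∈ Icc (0:ℝ) T,
      ‖(picard f t₀ x₁ θ₁)^[n] u t - (picard f t₀ x₂ θ₂)^[n] u t‖
        ≤ (‖x₁ - x₂‖ + T * Kθ * ‖θ₁ - θ₂‖) / (1 - T * Kx) := by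

  -- basic positivity facts
  have ha0 : 0 ≤ a := le_trans (by positivity) (ha x₁ hx₁)
  have h0ball : (0 : Euc nx) ∈ closedBall (0 : Euc nx) a := by
    simpa using ha0
  have hM0 : 0 ≤ M := le_trans (norm_nonneg _) (hM t₀ ht₀ θ₁ hθ₁ 0 h0ball)
  have ha0' : 0 < a := by nlinarith
  have hKθnn : 0 ≤ Kθ * ‖θ₁ - θ₂‖ :=
    le_trans (norm_nonneg _) (hKθ t₀ ht₀ 0 h0ball θ₁ hθ₁ θ₂ hθ₂)
  have hden : 0 < 1 - T * Kx := by linarith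
  set L : ℝ := (‖x₁ - x₂‖ + T * Kθ * ‖θ₁ - θ₂‖) / (1 - T * Kx) with hLdef
  have hLnn : 0 ≤ L := by
    apply div_nonneg _ hden.le
    nlinarith [norm_nonneg (x₁ - x₂)]
  have hLmul : L * (1 - T * Kx) = ‖x₁ - x₂‖ + T * Kθ * ‖θ₁ - θ₂‖ :=
    div_mul_cancel₀ _ hden.ne'
  -- the interval inclusion into Γ
  have hΓmem : ∀ s ∈ Icc (0:ℝ) T, s + t₀ ∈ Γ := fun s hs => hsub ⟨by linarith [hs.1], by linarith [hs.2]⟩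
  -- continuity of the integrand
  have hg_cont : ∀ (v : ℝ → Euc nx) (θ : Euc nθ), ContinuousOn v (Icc 0 T) →
      ContinuousOn (fun s => f (s + t₀) (v s) θ) (Icc (0:ℝ) T) := by
    intro v θ hv
    exact hfc.comp_continuousOn
      (((continuous_id.add continuous_const).continuousOn).prodMk (hv.prodMk continuousOn_const))
  have huIcc : uIcc (0:ℝ) T = Icc 0 T := uIcc_of_le hT.le
  -- invariant: iterates stay in C_a
  have key : ∀ (x : Euc nx), x ∈ X → ∀ (θ : Euc nθ), θ ∈ Θ → ∀ m : ℕ,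
      InCa T a ((picard f t₀ x θ)^[m] u) := by
    intro x hx θ hθ m
    induction m with
    | zero => simpa using hu
    | succ m ih =>
      rw [Function.iterate_succ_apply']
      set v := (picard f t₀ x θ)^[m] u with hv
      obtain ⟨hvc, hvb⟩ := ih
      have hgc : ContinuousOn (fun s => f (s + t₀) (v s) θ) (Icc (0:ℝ) T) :=
        hg_cont v θ hvc
      have hint : IntegrableOn (fun s => f (s + t₀) (v s) θ) (uIcc (0:ℝ) T) := by
        rw [huIcc]
        exact hgc.integrableOn_compact isCompact_Icc
      constructor
      · intro t ht
        have : ContinuousOn (fun t => x + ∫ s in (0:ℝ)..t, f (s + t₀) (v s) θ) (Icc (0:ℝ) T) := by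
          apply ContinuousOn.add continuousOn_const
          have := intervalIntegral.continuousOn_primitive_interval hint
          rwa [huIcc] at this
        exact this t ht
      · intro t ht
        have hbound : ‖∫ s in (0:ℝ)..t, f (s + t₀) (v s) θ‖ ≤ M * |t - 0| := by
          apply intervalIntegral.norm_integral_le_of_norm_le_const
          intro s hs
          rw [uIoc_of_le ht.1] at hs
          have hs' : s ∈ Icc (0:ℝ) T := ⟨hs.1.le, le_trans hs.2 ht.2⟩
          exact hM _ (hΓmem s hs') θ hθ _ (by simpa using hvb s hs')
        have : |t - 0| ≤ T := by rw [sub_zero, abs_of_nonneg ht.1]; exact ht.2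
        have h2 : ‖picard f t₀ x θ v t‖ ≤ ‖x‖ + M * T := by
          refine le_trans (norm_add_le _ _) ?_
          have := mul_le_mul_of_nonneg_left this hM0
          linarith
        have hxa := ha x hx
        nlinarith
  -- nx = 0 case: everything is trivial
  rcases subsingleton_or_nontrivial (Euc nx) with hss | hnt
  · intro t ht
    rw [Subsingleton.elim ((picard f t₀ x₁ θ₁)^[n] u t) ((picard f t₀ x₂ θ₂)^[n] u t)]
    simpa using hLnn
  -- Kx is nonnegative
  have hKxnn : 0 ≤ Kx := by
    obtain ⟨e, hene⟩ := exists_ne (0 : Euc nx)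
    set y : Euc nx := (a / ‖e‖) • e with hy
    have hne : ‖e‖ ≠ 0 := by simpa using hene
    have hyn : ‖y‖ = a := by
      rw [hy, norm_smul, norm_div, Real.norm_eq_abs, abs_of_nonneg ha0, norm_norm,
        div_mul_cancel₀ _ hne]
    have hyb : y ∈ closedBall (0 : Euc nx) a := by simpa [hyn] using le_refl a
    have := le_trans (norm_nonneg _) (hKx t₀ ht₀ θ₁ hθ₁ y hyb 0 h0ball)
    rw [sub_zero, hyn] at this
    nlinarith
    
  -- main induction
  induction n with
  | zero => intro t ht; simpa using hLnn
  | succ n ih =>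
    intro t ht
    rw [Function.iterate_succ_apply', Function.iterate_succ_apply']
    set v₁ := (picard f t₀ x₁ θ₁)^[n] u with hv₁
    set v₂ := (picard f t₀ x₂ θ₂)^[n] u with hv₂
    obtain ⟨hv₁c, hv₁b⟩ := key x₁ hx₁ θ₁ hθ₁ n
    obtain ⟨hv₂c, hv₂b⟩ := key x₂ hx₂ θ₂ hθ₂ n
    have hsubt : uIcc (0:ℝ) t ⊆ Icc (0:ℝ) T := by
      rw [uIcc_of_le ht.1]; exact Icc_subset_Icc le_rfl ht.2
    have hi₁ : IntervalIntegrable (fun s => f (s + t₀) (v₁ s) θ₁) volume 0 t :=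
      ((hg_cont v₁ θ₁ hv₁c).mono hsubt).intervalIntegrable
    have hi₂ : IntervalIntegrable (fun s => f (s + t₀) (v₂ s) θ₂) volume 0 t :=
      ((hg_cont v₂ θ₂ hv₂c).mono hsubt).intervalIntegrable
    have hdiff : picard f t₀ x₁ θ₁ v₁ t - picard f t₀ x₂ θ₂ v₂ t
        = (x₁ - x₂) + ∫ s in (0:ℝ)..t,
            (f (s + t₀) (v₁ s) θ₁ - f (s + t₀) (v₂ s) θ₂) := by
      rw [intervalIntegral.integral_sub hi₁ hi₂]
      simp only [picard]
      abel
    set c : ℝ := Kx * L + Kθ * ‖θ₁ - θ₂‖ with hc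
    have hcnn : 0 ≤ c := by positivity
    have hintb : ‖∫ s in (0:ℝ)..t,
        (f (s + t₀) (v₁ s) θ₁ - f (s + t₀) (v₂ s) θ₂)‖ ≤ c * |t - 0| := by
      apply intervalIntegral.norm_integral_le_of_norm_le_const
      intro s hs
      rw [uIoc_of_le ht.1] at hs
      have hs' : s ∈ Icc (0:ℝ) T := ⟨hs.1.le, le_trans hs.2 ht.2⟩
      have hb₁ : v₁ s ∈ closedBall (0 : Euc nx) a := by simpa using hv₁b s hs'
      have hb₂ : v₂ s ∈ closedBall (0 : Euc nx) a := by simpa using hv₂b s hs'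
      have hΓs := hΓmem s hs'
      calc ‖f (s + t₀) (v₁ s) θ₁ - f (s + t₀) (v₂ s) θ₂‖
          ≤ ‖f (s + t₀) (v₁ s) θ₁ - f (s + t₀) (v₂ s) θ₁‖
            + ‖f (s + t₀) (v₂ s) θ₁ - f (s + t₀) (v₂ s) θ₂‖ := by
            have : f (s + t₀) (v₁ s) θ₁ - f (s + t₀) (v₂ s) θ₂
                = (f (s + t₀) (v₁ s) θ₁ - f (s + t₀) (v₂ s) θ₁)
                  + (f (s + t₀) (v₂ s) θ₁ - f (s + t₀) (v₂ s) θ₂) := by abel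
            rw [this]; exact norm_add_le _ _
        _ ≤ Kx * ‖v₁ s - v₂ s‖ + Kθ * ‖θ₁ - θ₂‖ :=
            add_le_add (hKx _ hΓs θ₁ hθ₁ _ hb₁ _ hb₂) (hKθ _ hΓs _ hb₂ θ₁ hθ₁ θ₂ hθ₂)
        _ ≤ c := by
            have := ih s hs'
            nlinarith
    have habs : |t - 0| ≤ T := by rw [sub_zero, abs_of_nonneg ht.1]; exact ht.2
    have h1 : ‖picard f t₀ x₁ θ₁ v₁ t - picard f t₀ x₂ θ₂ v₂ t‖
        ≤ ‖x₁ - x₂‖ + c * T := by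
      rw [hdiff]
      refine le_trans (norm_add_le _ _) ?_
      have := mul_le_mul_of_nonneg_left habs hcnn
      linarith
    have : ‖x₁ - x₂‖ + c * T = L := by rw [hc]; nlinarith
    linarith
end
end

section
/- (Lipschitz continuity of gradients of Picard iterates in (x,θ), uniformly in the iteration order.) Assume f ∈ C¹ with ∇_x f and ∇_θ f Lipschitz continuous. Then there exists K > 0 such that for every n ∈ ℕ, all (x₁,θ₁), (x₂,θ₂) ∈ X × Θ, and every u ∈ C_a: ‖∇_{x,θ}(P_{t₀,x₁,θ₁}^n u) − ∇_{x,θ}(P_{t₀,x₂,θ₂}^n u)‖_∞ ≤ K·‖x₁ − x₂‖₂ + K·‖θ₁ − θ₂‖₂. -/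
open Set MeasureTheory Filter Topology Metric

noncomputable section

/-- Sup norm over `[0,T]`. -/
noncomputable def supIcc {nx : ℕ} (T : ℝ) (u : ℝ → Euc nx) : ℝ :=
  ⨆ t : Icc (0:ℝ) T, ‖u t‖

section Helpers
variable {E F G : Type*} [NormedAddCommGroup E] [NormedSpace ℝ E]
  [NormedAddCommGroup F] [NormedSpace ℝ F] [NormedAddCommGroup G] [NormedSpace ℝ G]

lemma contOn_primitive {T : ℝ} (hT : 0 ≤ T) {g : ℝ → E} (hg : ContinuousOn g (Icc 0 T)) :
    ContinuousOn (fun s => ∫ τ in (0:ℝ)..s, g τ) (Icc 0 T) := by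
  have h : IntegrableOn g (uIcc 0 T) := by
    rw [uIcc_of_le hT]; exact hg.integrableOn_Icc
  have := intervalIntegral.continuousOn_primitive_interval h
  rwa [uIcc_of_le hT] at this

lemma norm_intervalIntegral_le {T t Cc : ℝ} {g : ℝ → E} (ht : t ∈ Icc (0:ℝ) T) (hC : 0 ≤ Cc)
    (h : ∀ s ∈ Icc (0:ℝ) T, ‖g s‖ ≤ Cc) : ‖∫ s in (0:ℝ)..t, g s‖ ≤ Cc * T := by
  have h1 : ‖∫ s in (0:ℝ)..t, g s‖ ≤ Cc * |t - 0| := by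
    apply intervalIntegral.norm_integral_le_of_norm_le_const
    intro s hs
    rw [uIoc_of_le ht.1] at hs
    exact h s ⟨hs.1.le, hs.2.trans ht.2⟩
  refine h1.trans ?_
  rw [sub_zero, abs_of_nonneg ht.1]
  exact mul_le_mul_of_nonneg_left ht.2 hC

lemma clm_prod_decomp (B : E × F →L[ℝ] G) :
    B.prod (ContinuousLinearMap.snd ℝ E F)
      = (ContinuousLinearMap.inl ℝ G F).comp B
        + (ContinuousLinearMap.inr ℝ G F).comp (ContinuousLinearMap.snd ℝ E F) := by
  apply ContinuousLinearMap.ext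
  intro p
  simp [Prod.ext_iff]

lemma norm_inl_comp_le (B : E × F →L[ℝ] G) :
    ‖(ContinuousLinearMap.inl ℝ G F).comp B‖ ≤ ‖B‖ := by
  refine ContinuousLinearMap.opNorm_le_bound _ (norm_nonneg _) fun p => ?_
  simp only [ContinuousLinearMap.comp_apply, ContinuousLinearMap.inl_apply, Prod.norm_def,
    norm_zero]
  rw [max_eq_left (norm_nonneg _)]
  exact B.le_opNorm p

lemma norm_inr_comp_snd_le :
    ‖(ContinuousLinearMap.inr ℝ G F).comp (ContinuousLinearMap.snd ℝ E F)‖ ≤ 1 := by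
  refine ContinuousLinearMap.opNorm_le_bound _ zero_le_one fun p => ?_
  simp only [ContinuousLinearMap.comp_apply, ContinuousLinearMap.inr_apply,
    ContinuousLinearMap.coe_snd', Prod.norm_def, norm_zero, one_mul]
  rw [max_eq_right (norm_nonneg _)]
  exact norm_snd_le p

lemma norm_J_le (B : E × F →L[ℝ] G) :
    ‖(ContinuousLinearMap.inl ℝ G F).comp B
      + (ContinuousLinearMap.inr ℝ G F).comp (ContinuousLinearMap.snd ℝ E F)‖ ≤ ‖B‖ + 1 := by
  refine (norm_add_le _ _).trans ?_
  have := norm_inl_comp_le (G := G) B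
  have := norm_inr_comp_snd_le (G := G) (E := E) (F := F)
  linarith

def vIter {nx nθ : ℕ} (f : ℝ → Euc nx → Euc nθ → Euc nx) (t₀ : ℝ) (u : ℝ → Euc nx)
    (n : ℕ) (p : Euc nx × Euc nθ) : ℝ → Euc nx :=
  (picard f t₀ p.1 p.2)^[n] u

lemma vIter_zero {nx nθ : ℕ} (f : ℝ → Euc nx → Euc nθ → Euc nx) (t₀ : ℝ) (u : ℝ → Euc nx)
    (p : Euc nx × Euc nθ) : vIter f t₀ u 0 p = u := rfl

lemma vIter_succ {nx nθ : ℕ} (f : ℝ → Euc nx → Euc nθ → Euc nx) (t₀ : ℝ) (u : ℝ → Euc nx)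
    (n : ℕ) (p : Euc nx × Euc nθ) :
    vIter f t₀ u (n+1) p
      = fun t => p.1 + ∫ s in (0:ℝ)..t, f (s + t₀) (vIter f t₀ u n p s) p.2 := by
  funext t
  simp only [vIter, Function.iterate_succ_apply', picard]

def CsSeq (T L : ℝ) : ℕ → ℝ
  | 0 => 0
  | (n+1) => 1 + T * L * (CsSeq T L n + 1)

lemma CsSeq_nonneg {T L : ℝ} (hT : 0 ≤ T) (hL : 0 ≤ L) : ∀ n, 0 ≤ CsSeq T L n
  | 0 => le_refl 0
  | (n+1) => by
      have := CsSeq_nonneg hT hL n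
      have : 0 ≤ T * L * (CsSeq T L n + 1) := by positivity
      simp only [CsSeq]; linarith

end Helpers
def Jm {nx nθ : ℕ} (B : Euc nx × Euc nθ →L[ℝ] Euc nx) :
    Euc nx × Euc nθ →L[ℝ] Euc nx × Euc nθ :=
  (ContinuousLinearMap.inl ℝ (Euc nx) (Euc nθ)).comp B
    + (ContinuousLinearMap.inr ℝ (Euc nx) (Euc nθ)).comp
        (ContinuousLinearMap.snd ℝ (Euc nx) (Euc nθ))

lemma Jm_norm_le {nx nθ : ℕ} (B : Euc nx × Euc nθ →L[ℝ] Euc nx) : ‖Jm B‖ ≤ ‖B‖ + 1 :=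
  norm_J_le B

lemma prod_snd_eq_Jm {nx nθ : ℕ} (B : Euc nx × Euc nθ →L[ℝ] Euc nx) :
    B.prod (ContinuousLinearMap.snd ℝ (Euc nx) (Euc nθ)) = Jm B :=
  clm_prod_decomp B

lemma Jm_sub {nx nθ : ℕ} (B₁ B₂ : Euc nx × Euc nθ →L[ℝ] Euc nx) :
    Jm B₁ - Jm B₂ = (ContinuousLinearMap.inl ℝ (Euc nx) (Euc nθ)).comp (B₁ - B₂) := by
  simp only [Jm]
  rw [ContinuousLinearMap.comp_sub]
  abel

lemma comp_Jm_norm_le {nx nθ : ℕ} (A : Euc nx × Euc nθ →L[ℝ] Euc nx)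
    (B : Euc nx × Euc nθ →L[ℝ] Euc nx) :
    ‖A.comp (Jm B)‖ ≤ ‖A.comp (ContinuousLinearMap.inl ℝ (Euc nx) (Euc nθ))‖ * ‖B‖ + ‖A‖ := by
  rw [Jm, ContinuousLinearMap.comp_add]
  refine (norm_add_le _ _).trans ?_
  have h1 : ‖A.comp ((ContinuousLinearMap.inl ℝ (Euc nx) (Euc nθ)).comp B)‖
      ≤ ‖A.comp (ContinuousLinearMap.inl ℝ (Euc nx) (Euc nθ))‖ * ‖B‖ := by
    rw [← ContinuousLinearMap.comp_assoc]
    exact ContinuousLinearMap.opNorm_comp_le _ _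
  have h2 : ‖A.comp ((ContinuousLinearMap.inr ℝ (Euc nx) (Euc nθ)).comp
      (ContinuousLinearMap.snd ℝ (Euc nx) (Euc nθ)))‖ ≤ ‖A‖ := by
    refine (ContinuousLinearMap.opNorm_comp_le _ _).trans ?_
    have := norm_inr_comp_snd_le (G := Euc nθ) (E := Euc nx) (F := Euc nθ)
    calc ‖A‖ * ‖_‖ ≤ ‖A‖ * 1 := by
          exact mul_le_mul_of_nonneg_left norm_inr_comp_snd_le (norm_nonneg _)
      _ = ‖A‖ := mul_one _
  linarith

lemma contOn_Jm {nx nθ : ℕ} {s : Set ℝ} {B : ℝ → Euc nx × Euc nθ →L[ℝ] Euc nx}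
    (hB : ContinuousOn B s) : ContinuousOn (fun τ => Jm (B τ)) s := by
  simp only [Jm]
  exact (continuousOn_const.clm_comp hB).add continuousOn_const

set_option maxHeartbeats 2000000

/-- **Lipschitz continuity of gradients of Picard iterates in `(x,θ)`, uniformly in the
iteration order.**  There exists `K > 0` such that for every `n`, all
`(x₁,θ₁),(x₂,θ₂) ∈ X × Θ` and every `u ∈ C_a`:
`‖∇(P^n_{t₀,x₁,θ₁}u) − ∇(P^n_{t₀,x₂,θ₂}u)‖_∞ ≤ K‖x₁−x₂‖ + K‖θ₁−θ₂‖`. -/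
theorem picard_gradient_lipschitz_in_parameters {nx nθ : ℕ}
    (Γ : Set ℝ) (X : Set (Euc nx)) (Θ : Set (Euc nθ))
    (hΓ : IsCompact Γ) (hX : IsCompact X) (hΘ : IsCompact Θ)
    (t₀ : ℝ) (ht₀ : t₀ ∈ Γ)
    (f : ℝ → Euc nx → Euc nθ → Euc nx)
    (hfc : Continuous fun p : ℝ × Euc nx × Euc nθ => f p.1 p.2.1 p.2.2)
    (a Kx M T : ℝ)
    (ha : ∀ x ∈ X, 2 * ‖x‖ ≤ a)
    (hKx : ∀ t ∈ Γ, ∀ θ ∈ Θ, ∀ x ∈ closedBall (0 : Euc nx) a, ∀ y ∈ closedBall (0 : Euc nx) a,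
      ‖f t x θ - f t y θ‖ ≤ Kx * ‖x - y‖)
    (hM : ∀ t ∈ Γ, ∀ θ ∈ Θ, ∀ x ∈ closedBall (0 : Euc nx) a, ‖f t x θ‖ ≤ M)
    (hT : 0 < T) (hTK : T * Kx < 1) (hTM : 2 * M * T < a)
    (hsub : Icc t₀ (t₀ + T) ⊆ Γ)
    -- `f ∈ C¹` in `(x,θ)`, with derivative `f'` jointly continuous and Lipschitz
    (f' : ℝ → Euc nx → Euc nθ → (Euc nx × Euc nθ →L[ℝ] Euc nx))
    (hf' : ∀ t x θ, HasFDerivAt (fun p : Euc nx × Euc nθ => f t p.1 p.2) (f' t x θ) (x, θ))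
    (hf'c : Continuous fun p : ℝ × Euc nx × Euc nθ => f' p.1 p.2.1 p.2.2)
    (Kf : ℝ)
    (hf'lip : ∀ t ∈ Γ, ∀ x₁ ∈ closedBall (0 : Euc nx) a, ∀ x₂ ∈ closedBall (0 : Euc nx) a,
      ∀ θ₁ ∈ Θ, ∀ θ₂ ∈ Θ, ‖f' t x₁ θ₁ - f' t x₂ θ₂‖ ≤ Kf * (‖x₁ - x₂‖ + ‖θ₁ - θ₂‖))
    -- `S u n t (x,θ)` is the derivative of `(x,θ) ↦ (P^n_{t₀,x,θ} u)(t)`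
    (S : (ℝ → Euc nx) → ℕ → ℝ → Euc nx × Euc nθ → (Euc nx × Euc nθ →L[ℝ] Euc nx))
    (hS : ∀ u, InCa T a u → ∀ n, ∀ t ∈ Icc (0:ℝ) T, ∀ x ∈ X, ∀ θ ∈ Θ,
      HasFDerivAt (fun p : Euc nx × Euc nθ => (picard f t₀ p.1 p.2)^[n] u t)
        (S u n t (x, θ)) (x, θ)) :
    ∃ K : ℝ, 0 < K ∧
      ∀ n : ℕ, ∀ x₁ ∈ X, ∀ x₂ ∈ X, ∀ θ₁ ∈ Θ, ∀ θ₂ ∈ Θ, ∀ u, InCa T a u →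
        ∀ t ∈ Icc (0:ℝ) T,
          ‖S u n t (x₁, θ₁) - S u n t (x₂, θ₂)‖
            ≤ K * ‖x₁ - x₂‖ + K * ‖θ₁ - θ₂‖ := by
  classical
  -- trivial case: `nx = 0`
  rcases isEmpty_or_nonempty (Fin nx) with hnx | hnx
  · refine ⟨1, one_pos, fun n x₁ _ x₂ _ θ₁ _ θ₂ _ u _ t _ => ?_⟩
    have he : S u n t (x₁, θ₁) = S u n t (x₂, θ₂) :=
      ContinuousLinearMap.ext fun h => Subsingleton.elim _ _
    rw [he, sub_self, norm_zero]
    positivity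
  -- trivial case: `X = ∅` or `Θ = ∅`
  rcases X.eq_empty_or_nonempty with rfl | ⟨xb, hxb⟩
  · exact ⟨1, one_pos, fun n x₁ hx₁ => absurd hx₁ (notMem_empty _)⟩
  rcases Θ.eq_empty_or_nonempty with rfl | ⟨θb, hθb⟩
  · exact ⟨1, one_pos, fun n x₁ _ x₂ _ θ₁ hθ₁ => absurd hθ₁ (notMem_empty _)⟩
  -- basic positivity facts
  have ha0 : (0:ℝ) ≤ a := le_trans (by positivity) (ha xb hxb)
  have hM0 : 0 ≤ M := le_trans (norm_nonneg _) (hM t₀ ht₀ θb hθb 0 (by simpa using ha0))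
  have apos : 0 < a := lt_of_le_of_lt (by positivity) hTM
  have hKx0 : 0 ≤ Kx := by
    set i : Fin nx := hnx.some
    set y : Euc nx := EuclideanSpace.single i a with hy
    have hyn : ‖y‖ = a := by rw [hy, EuclideanSpace.norm_single, Real.norm_eq_abs, abs_of_nonneg ha0]
    have h1 : (0:ℝ) ≤ Kx * a := by
      have := hKx t₀ ht₀ θb hθb y (by simpa [hyn] using le_refl a) 0 (by simpa using ha0)
      simp only [sub_zero, hyn] at this
      exact le_trans (norm_nonneg _) this
    by_contra hc
    push_neg at hc
    nlinarith
  have hden : 0 < 1 - T * Kx := by linarith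
  -- bound `R` for the `θ` variable
  obtain ⟨R₀, hR₀⟩ := hΘ.isBounded.subset_closedBall (0 : Euc nθ)
  have hR₀0 : 0 ≤ R₀ := by
    have := hR₀ hθb
    simp only [mem_closedBall, dist_zero_right] at this
    exact le_trans (norm_nonneg _) this
  obtain ⟨R, hRdef⟩ : ∃ y : ℝ, y = R₀ + 1 := ⟨_, rfl⟩
  -- bound `L` for `‖f'‖` on `Γ' × B_a × B_R`
  obtain ⟨L₀, hL₀⟩ : ∃ L₀, ∀ q ∈ (Icc t₀ (t₀+T)) ×ˢ (closedBall (0 : Euc nx) a ×ˢ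
      closedBall (0 : Euc nθ) R), ‖f' q.1 q.2.1 q.2.2‖ ≤ L₀ :=
    (isCompact_Icc.prod ((isCompact_closedBall _ _).prod
      (isCompact_closedBall _ _))).exists_bound_of_continuousOn hf'c.continuousOn
  obtain ⟨L, hLdef⟩ : ∃ y : ℝ, y = max L₀ 0 := ⟨_, rfl⟩
  have hL0 : 0 ≤ L := by rw [hLdef]; exact le_max_right _ _
  have hL : ∀ t ∈ Icc t₀ (t₀+T), ∀ x ∈ closedBall (0 : Euc nx) a,
      ∀ θ ∈ closedBall (0 : Euc nθ) R, ‖f' t x θ‖ ≤ L :=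
    fun t ht x hx θ hθ => le_trans (hL₀ (t, x, θ) ⟨ht, hx, hθ⟩) (by rw [hLdef]; exact le_max_left _ _)
  -- `f` is jointly `L`-Lipschitz in `(x, θ)` on `B_a × B_R`
  have fLip : ∀ t ∈ Icc t₀ (t₀+T), ∀ x₁ ∈ closedBall (0 : Euc nx) a,
      ∀ x₂ ∈ closedBall (0 : Euc nx) a, ∀ θ₁ ∈ closedBall (0 : Euc nθ) R,
      ∀ θ₂ ∈ closedBall (0 : Euc nθ) R,
      ‖f t x₁ θ₁ - f t x₂ θ₂‖ ≤ L * (‖x₁ - x₂‖ + ‖θ₁ - θ₂‖) := by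
    intro t ht x₁ hx₁ x₂ hx₂ θ₁ hθ₁ θ₂ hθ₂
    have hconv : Convex ℝ ((closedBall (0 : Euc nx) a) ×ˢ (closedBall (0 : Euc nθ) R)) :=
      (convex_closedBall _ _).prod (convex_closedBall _ _)
    have hlip : LipschitzOnWith L.toNNReal (fun q : Euc nx × Euc nθ => f t q.1 q.2)
        ((closedBall (0 : Euc nx) a) ×ˢ (closedBall (0 : Euc nθ) R)) := by
      refine hconv.lipschitzOnWith_of_nnnorm_hasFDerivWithin_le
        (f' := fun q => f' t q.1 q.2) (fun q hq => (hf' t q.1 q.2).hasFDerivWithinAt) ?_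
      intro q hq
      rw [← NNReal.coe_le_coe, coe_nnnorm, Real.coe_toNNReal _ hL0]
      exact hL t ht q.1 hq.1 q.2 hq.2
    have := hlip.dist_le_mul (x₁, θ₁) ⟨hx₁, hθ₁⟩ (x₂, θ₂) ⟨hx₂, hθ₂⟩
    rw [Real.coe_toNNReal _ hL0, dist_eq_norm, Prod.dist_eq] at this
    refine this.trans ?_
    have h1 : dist x₁ x₂ ≤ ‖x₁ - x₂‖ + ‖θ₁ - θ₂‖ := by
      rw [dist_eq_norm]; have := norm_nonneg (θ₁ - θ₂); linarith
    have h2 : dist θ₁ θ₂ ≤ ‖x₁ - x₂‖ + ‖θ₁ - θ₂‖ := by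
      rw [dist_eq_norm]; have := norm_nonneg (x₁ - x₂); linarith
    exact mul_le_mul_of_nonneg_left (max_le h1 h2) hL0
  -- the `x`-partial of `f'` is bounded by `Kx` at interior points
  have hf'xle : ∀ t ∈ Γ, ∀ θ ∈ Θ, ∀ x : Euc nx, ‖x‖ < a →
      ‖(f' t x θ).comp (ContinuousLinearMap.inl ℝ (Euc nx) (Euc nθ))‖ ≤ Kx := by
    intro t ht θ hθ x hx
    have hpart : HasFDerivAt (fun y => f t y θ)
        ((f' t x θ).comp (ContinuousLinearMap.inl ℝ (Euc nx) (Euc nθ))) x := by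
      have h1 : HasFDerivAt (fun y : Euc nx => ((y, θ) : Euc nx × Euc nθ))
          ((ContinuousLinearMap.id ℝ (Euc nx)).prod (0 : Euc nx →L[ℝ] Euc nθ)) x :=
        HasFDerivAt.prodMk (hasFDerivAt_id x) (hasFDerivAt_const θ x)
      have h2 : (ContinuousLinearMap.id ℝ (Euc nx)).prod (0 : Euc nx →L[ℝ] Euc nθ)
          = ContinuousLinearMap.inl ℝ (Euc nx) (Euc nθ) := by
        apply ContinuousLinearMap.ext
        intro y
        simp [ContinuousLinearMap.inl_apply]
      rw [h2] at h1
      exact (hf' t x θ).comp x h1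
    have hball : ∀ y ∈ ball x (a - ‖x‖), y ∈ closedBall (0 : Euc nx) a := by
      intro y hy
      simp only [mem_ball, dist_eq_norm] at hy
      simp only [mem_closedBall, dist_zero_right]
      calc ‖y‖ = ‖(y - x) + x‖ := by rw [sub_add_cancel]
        _ ≤ ‖y - x‖ + ‖x‖ := norm_add_le _ _
        _ ≤ a := by linarith
    have hlip : LipschitzOnWith Kx.toNNReal (fun y => f t y θ) (ball x (a - ‖x‖)) := by
      apply LipschitzOnWith.of_dist_le_mul
      intro y hy z hz
      rw [Real.coe_toNNReal _ hKx0, dist_eq_norm, dist_eq_norm]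
      exact hKx t ht θ hθ y (hball y hy) z (hball z hz)
    have := hpart.le_of_lipschitzOn (ball_mem_nhds x (by linarith)) hlip
    rwa [Real.coe_toNNReal _ hKx0] at this
  -- slack and radius constants
  obtain ⟨r', hr'def⟩ : ∃ y : ℝ, y = a/2 - T*M := ⟨_, rfl⟩
  have hr'pos : 0 < r' := by rw [hr'def]; linarith
  have hTL1 : (0:ℝ) < 1 + T*L := by positivity
  obtain ⟨ε₀, hε₀def⟩ : ∃ y : ℝ, y = min 1 (r' / (1 + T*L)) := ⟨_, rfl⟩
  have hε₀ : 0 < ε₀ := by rw [hε₀def]; exact lt_min one_pos (by positivity)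
  have hε₀1 : ε₀ ≤ 1 := by rw [hε₀def]; exact min_le_left _ _
  have hε₀r : ε₀ * (1 + T*L) ≤ r' := by
    have h := min_le_right 1 (r' / (1 + T*L))
    calc ε₀ * (1+T*L) ≤ (r'/(1+T*L)) * (1+T*L) :=
          mul_le_mul_of_nonneg_right ((le_of_eq hε₀def).trans h) hTL1.le
      _ = r' := div_mul_cancel₀ _ hTL1.ne'
  obtain ⟨Cb, hCbdef⟩ : ∃ y : ℝ, y = (1 + T*L)/(1 - T*Kx) := ⟨_, rfl⟩
  have hCb0 : 0 < Cb := by rw [hCbdef]; exact div_pos hTL1 hden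
  have hCbeq : Cb * (1 - T*Kx) = 1 + T*L := by rw [hCbdef]; exact div_mul_cancel₀ _ hden.ne'
  obtain ⟨Kf', hKf'def⟩ : ∃ y : ℝ, y = max Kf 0 := ⟨_, rfl⟩
  have hKf'0 : 0 ≤ Kf' := by rw [hKf'def]; exact le_max_right _ _
  obtain ⟨K₀, hK₀def⟩ : ∃ y : ℝ, y = T * Kf' * ((Cb+1)*(Cb+1)) / (1 - T*Kx) := ⟨_, rfl⟩
  have hK₀0 : 0 ≤ K₀ := by rw [hK₀def]; exact div_nonneg (by positivity) hden.le
  have hK₀eq : K₀ * (1 - T*Kx) = T * Kf' * ((Cb+1)*(Cb+1)) := by rw [hK₀def]; exact div_mul_cancel₀ _ hden.ne'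
  have hf'lipK : ∀ t ∈ Γ, ∀ x₁ ∈ closedBall (0 : Euc nx) a, ∀ x₂ ∈ closedBall (0 : Euc nx) a,
      ∀ θ₁ ∈ Θ, ∀ θ₂ ∈ Θ, ‖f' t x₁ θ₁ - f' t x₂ θ₂‖ ≤ Kf' * (‖x₁ - x₂‖ + ‖θ₁ - θ₂‖) := by
    intro t ht x₁ hx₁ x₂ hx₂ θ₁ hθ₁ θ₂ hθ₂
    refine (hf'lip t ht x₁ hx₁ x₂ hx₂ θ₁ hθ₁ θ₂ hθ₂).trans ?_
    exact mul_le_mul_of_nonneg_right (by rw [hKf'def]; exact le_max_left _ _) (by positivity)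
  have hshift : ∀ s ∈ Icc (0:ℝ) T, s + t₀ ∈ Icc t₀ (t₀+T) :=
    fun s hs => ⟨by linarith [hs.1], by linarith [hs.2]⟩
  have hshiftΓ : ∀ s ∈ Icc (0:ℝ) T, s + t₀ ∈ Γ := fun s hs => hsub (hshift s hs)
  have hΘR : ∀ θ ∈ Θ, θ ∈ closedBall (0 : Euc nθ) R := by
    intro θ hθ
    have := hR₀ hθ
    simp only [mem_closedBall, dist_zero_right] at this ⊢
    rw [hRdef]; linarith
  -- the main inductive package
  have key : ∀ u, InCa T a u → ∀ n : ℕ,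
      (∀ x₀ ∈ X, ∀ θ₀ ∈ Θ, ∀ p ∈ ball ((x₀,θ₀) : Euc nx × Euc nθ) ε₀, ∀ s ∈ Icc (0:ℝ) T,
        ‖vIter f t₀ u n p s‖ ≤ a)
    ∧ (∀ x₀ ∈ X, ∀ θ₀ ∈ Θ, ∀ p ∈ ball ((x₀,θ₀) : Euc nx × Euc nθ) ε₀,
        ∀ q ∈ ball ((x₀,θ₀) : Euc nx × Euc nθ) ε₀, ∀ s ∈ Icc (0:ℝ) T,
        ‖vIter f t₀ u n p s - vIter f t₀ u n q s‖ ≤ CsSeq T L n * ‖p - q‖)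
    ∧ (∀ x₀ ∈ X, ∀ θ₀ ∈ Θ, ContinuousOn (fun s => S u n s (x₀,θ₀)) (Icc (0:ℝ) T))
    ∧ (∀ x₀ ∈ X, ∀ θ₀ ∈ Θ, ∀ s ∈ Icc (0:ℝ) T, ‖S u n s (x₀,θ₀)‖ ≤ Cb)
    ∧ (∀ x₁ ∈ X, ∀ θ₁ ∈ Θ, ∀ x₂ ∈ X, ∀ θ₂ ∈ Θ, ∀ s ∈ Icc (0:ℝ) T,
        ‖vIter f t₀ u n (x₁,θ₁) s - vIter f t₀ u n (x₂,θ₂) s‖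
          ≤ Cb * ‖((x₁,θ₁) : Euc nx × Euc nθ) - (x₂,θ₂)‖)
    ∧ (∀ x₁ ∈ X, ∀ θ₁ ∈ Θ, ∀ x₂ ∈ X, ∀ θ₂ ∈ Θ, ∀ s ∈ Icc (0:ℝ) T,
        ‖S u n s (x₁,θ₁) - S u n s (x₂,θ₂)‖
          ≤ K₀ * ‖((x₁,θ₁) : Euc nx × Euc nθ) - (x₂,θ₂)‖)
    ∧ (n ≠ 0 → ∀ x₀ ∈ X, ∀ θ₀ ∈ Θ, ∀ s ∈ Icc (0:ℝ) T,
        ‖vIter f t₀ u n (x₀,θ₀) s‖ ≤ a/2 + T*M) := by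
    intro u hu
    -- continuity helpers
    have contg : ∀ (w : ℝ → Euc nx) (θ : Euc nθ), ContinuousOn w (Icc 0 T) →
        ContinuousOn (fun τ => f (τ + t₀) (w τ) θ) (Icc (0:ℝ) T) := by
      intro w θ hw
      have h1 : ContinuousOn (fun τ : ℝ => ((τ + t₀, (w τ, θ)) : ℝ × Euc nx × Euc nθ))
          (Icc 0 T) :=
        ((continuous_id.add continuous_const).continuousOn).prodMk (hw.prodMk continuousOn_const)
      exact hfc.comp_continuousOn h1
    have hv_cont : ∀ n p, ContinuousOn (fun s => vIter f t₀ u n p s) (Icc (0:ℝ) T) := by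
      intro n
      induction n with
      | zero => intro p; simpa [vIter_zero] using hu.1
      | succ n ih =>
        intro p
        have he : (fun s => vIter f t₀ u (n+1) p s)
            = fun s => p.1 + ∫ τ in (0:ℝ)..s, f (τ + t₀) (vIter f t₀ u n p τ) p.2 := by
          funext s; rw [vIter_succ]
        rw [he]
        exact continuousOn_const.add (contOn_primitive hT.le (contg _ _ (ih p)))
    have S0 : ∀ s ∈ Icc (0:ℝ) T, ∀ x₀ ∈ X, ∀ θ₀ ∈ Θ, S u 0 s (x₀,θ₀) = 0 := by
      intro s hs x₀ hx₀ θ₀ hθ₀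
      have h1 := hS u hu 0 s hs x₀ hx₀ θ₀ hθ₀
      have h2 : HasFDerivAt (fun p : Euc nx × Euc nθ => (picard f t₀ p.1 p.2)^[0] u s)
          (0 : Euc nx × Euc nθ →L[ℝ] Euc nx) ((x₀,θ₀) : Euc nx × Euc nθ) := by
        simp only [Function.iterate_zero, id_eq]
        exact hasFDerivAt_const (u s) _
      exact h1.unique h2
    have hIccsub : ∀ t ∈ Icc (0:ℝ) T, uIcc (0:ℝ) t ⊆ Icc (0:ℝ) T := by
      intro t ht; rw [uIcc_of_le ht.1]; exact Icc_subset_Icc le_rfl ht.2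
    have hIocsub : ∀ t ∈ Icc (0:ℝ) T, Set.uIoc (0:ℝ) t ⊆ Icc (0:ℝ) T := by
      intro t ht; rw [uIoc_of_le ht.1]; exact fun τ hτ => ⟨hτ.1.le, hτ.2.trans ht.2⟩
    have hballθ : ∀ (x₀ : Euc nx) (θ₀ : Euc nθ), θ₀ ∈ Θ →
        ∀ p ∈ ball ((x₀,θ₀) : Euc nx × Euc nθ) ε₀, p.2 ∈ closedBall (0 : Euc nθ) R := by
      intro x₀ θ₀ hθ₀ p hp
      have h2 : ‖p - ((x₀,θ₀) : Euc nx × Euc nθ)‖ < ε₀ := by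
        rwa [mem_ball, dist_eq_norm] at hp
      have h1 : ‖p.2 - θ₀‖ ≤ ε₀ :=
        le_trans (norm_snd_le (p - ((x₀,θ₀) : Euc nx × Euc nθ))) h2.le
      have h3 := hR₀ hθ₀
      simp only [mem_closedBall, dist_zero_right] at h3 ⊢
      calc ‖p.2‖ = ‖(p.2 - θ₀) + θ₀‖ := by rw [sub_add_cancel]
        _ ≤ ‖p.2 - θ₀‖ + ‖θ₀‖ := norm_add_le _ _
        _ ≤ R := by rw [hRdef]; linarith
    have hballx : ∀ (x₀ : Euc nx), x₀ ∈ X → ∀ (θ₀ : Euc nθ),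
        ∀ p ∈ ball ((x₀,θ₀) : Euc nx × Euc nθ) ε₀, ‖p.1‖ ≤ a/2 + ε₀ := by
      intro x₀ hx₀ θ₀ p hp
      have h2 : ‖p - ((x₀,θ₀) : Euc nx × Euc nθ)‖ < ε₀ := by
        rwa [mem_ball, dist_eq_norm] at hp
      have h1 : ‖p.1 - x₀‖ ≤ ε₀ :=
        le_trans (norm_fst_le (p - ((x₀,θ₀) : Euc nx × Euc nθ))) h2.le
      have h3 := ha x₀ hx₀
      calc ‖p.1‖ = ‖(p.1 - x₀) + x₀‖ := by rw [sub_add_cancel]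
        _ ≤ ‖p.1 - x₀‖ + ‖x₀‖ := norm_add_le _ _
        _ ≤ a/2 + ε₀ := by linarith
    -- continuity of the integrand of the derivative recursion
    have contF' : ∀ n, ∀ x₀ ∈ X, ∀ θ₀ ∈ Θ,
        ContinuousOn (fun s => S u n s ((x₀,θ₀) : Euc nx × Euc nθ)) (Icc (0:ℝ) T) →
        ContinuousOn (fun s => (f' (s+t₀) (vIter f t₀ u n ((x₀,θ₀) : Euc nx × Euc nθ) s) θ₀).comp
          (Jm (S u n s ((x₀,θ₀) : Euc nx × Euc nθ)))) (Icc (0:ℝ) T) := by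
      intro n x₀ hx₀ θ₀ hθ₀ hScont
      have hvc := hv_cont n ((x₀,θ₀) : Euc nx × Euc nθ)
      have contA : ContinuousOn
          (fun s => f' (s+t₀) (vIter f t₀ u n ((x₀,θ₀) : Euc nx × Euc nθ) s) θ₀)
          (Icc (0:ℝ) T) := by
        have h1 : ContinuousOn (fun s : ℝ =>
            ((s + t₀, (vIter f t₀ u n ((x₀,θ₀) : Euc nx × Euc nθ) s, θ₀)) :
              ℝ × Euc nx × Euc nθ)) (Icc 0 T) :=
          ((continuous_id.add continuous_const).continuousOn).prodMk (hvc.prodMk continuousOn_const)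
        exact hf'c.comp_continuousOn h1
      exact contA.clm_comp (contOn_Jm hScont)
    -- the recursion formula for `S`
    have recS : ∀ n : ℕ, ∀ Cn : ℝ, 0 ≤ Cn → ∀ x₀, x₀ ∈ X → ∀ θ₀, θ₀ ∈ Θ →
        (∀ p ∈ ball ((x₀,θ₀) : Euc nx × Euc nθ) ε₀, ∀ s ∈ Icc (0:ℝ) T,
          ‖vIter f t₀ u n p s‖ ≤ a) →
        (∀ p ∈ ball ((x₀,θ₀) : Euc nx × Euc nθ) ε₀, ∀ q ∈ ball ((x₀,θ₀) : Euc nx × Euc nθ) ε₀,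
          ∀ s ∈ Icc (0:ℝ) T, ‖vIter f t₀ u n p s - vIter f t₀ u n q s‖ ≤ Cn * ‖p - q‖) →
        ContinuousOn (fun s => S u n s ((x₀,θ₀) : Euc nx × Euc nθ)) (Icc (0:ℝ) T) →
        ∀ t ∈ Icc (0:ℝ) T,
          S u (n+1) t ((x₀,θ₀) : Euc nx × Euc nθ) = ContinuousLinearMap.fst ℝ (Euc nx) (Euc nθ)
            + ∫ s in (0:ℝ)..t,
                (f' (s+t₀) (vIter f t₀ u n ((x₀,θ₀) : Euc nx × Euc nθ) s) θ₀).comp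
                  (Jm (S u n s ((x₀,θ₀) : Euc nx × Euc nθ))) := by
      intro n Cn hCn x₀ hx₀ θ₀ hθ₀ hQ1 hQ3 hScont t ht
      have hF'cont := contF' n x₀ hx₀ θ₀ hθ₀ hScont
      have h_meas : ∀ᶠ p in 𝓝 ((x₀,θ₀) : Euc nx × Euc nθ), AEStronglyMeasurable
          (fun s => f (s+t₀) (vIter f t₀ u n p s) p.2) (volume.restrict (Set.uIoc (0:ℝ) t)) :=
        Eventually.of_forall fun p =>
          ((contg _ p.2 (hv_cont n p)).mono (hIocsub t ht)).aestronglyMeasurable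
            measurableSet_uIoc
      have h_int : IntervalIntegrable
          (fun s => f (s+t₀) (vIter f t₀ u n ((x₀,θ₀) : Euc nx × Euc nθ) s) θ₀) volume 0 t :=
        ((contg _ θ₀ (hv_cont n _)).mono (hIccsub t ht)).intervalIntegrable
      have hF'meas : AEStronglyMeasurable
          (fun s => (f' (s+t₀) (vIter f t₀ u n ((x₀,θ₀) : Euc nx × Euc nθ) s) θ₀).comp
            (Jm (S u n s ((x₀,θ₀) : Euc nx × Euc nθ)))) (volume.restrict (Set.uIoc (0:ℝ) t)) :=
        (hF'cont.mono (hIocsub t ht)).aestronglyMeasurable measurableSet_uIoc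
      have h_lip : ∀ᵐ s ∂(volume : Measure ℝ), s ∈ Set.uIoc (0:ℝ) t →
          LipschitzOnWith (Real.nnabs (L * (Cn + 1)))
            (fun p : Euc nx × Euc nθ => f (s+t₀) (vIter f t₀ u n p s) p.2)
            (ball ((x₀,θ₀) : Euc nx × Euc nθ) ε₀) := by
        refine Eventually.of_forall fun s hs => ?_
        have hsIcc := hIocsub t ht hs
        apply LipschitzOnWith.of_dist_le_mul
        intro p hp q hq
        rw [dist_eq_norm, dist_eq_norm, Real.coe_nnabs, abs_of_nonneg (by positivity)]
        have hyp : vIter f t₀ u n p s ∈ closedBall (0 : Euc nx) a := by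
          simp only [mem_closedBall, dist_zero_right]; exact hQ1 p hp s hsIcc
        have hyq : vIter f t₀ u n q s ∈ closedBall (0 : Euc nx) a := by
          simp only [mem_closedBall, dist_zero_right]; exact hQ1 q hq s hsIcc
        have h1 := fLip (s+t₀) (hshift s hsIcc) _ hyp _ hyq
          p.2 (hballθ x₀ θ₀ hθ₀ p hp) q.2 (hballθ x₀ θ₀ hθ₀ q hq)
        refine h1.trans ?_
        have h2 := hQ3 p hp q hq s hsIcc
        have h3 : ‖p.2 - q.2‖ ≤ ‖p - q‖ := by
          have := norm_snd_le (p - q)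
          rwa [Prod.snd_sub] at this
        calc L * (‖vIter f t₀ u n p s - vIter f t₀ u n q s‖ + ‖p.2 - q.2‖)
            ≤ L * (Cn * ‖p - q‖ + ‖p - q‖) :=
              mul_le_mul_of_nonneg_left (add_le_add h2 h3) hL0
          _ = L * (Cn + 1) * ‖p - q‖ := by ring
      have h_diff : ∀ᵐ s ∂(volume : Measure ℝ), s ∈ Set.uIoc (0:ℝ) t →
          HasFDerivAt (fun p : Euc nx × Euc nθ => f (s+t₀) (vIter f t₀ u n p s) p.2)
            ((f' (s+t₀) (vIter f t₀ u n ((x₀,θ₀) : Euc nx × Euc nθ) s) θ₀).comp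
              (Jm (S u n s ((x₀,θ₀) : Euc nx × Euc nθ))))
            ((x₀,θ₀) : Euc nx × Euc nθ) := by
        refine Eventually.of_forall fun s hs => ?_
        have hsIcc := hIocsub t ht hs
        have hinner : HasFDerivAt (fun p : Euc nx × Euc nθ => (vIter f t₀ u n p s, p.2))
            ((S u n s ((x₀,θ₀) : Euc nx × Euc nθ)).prod
              (ContinuousLinearMap.snd ℝ (Euc nx) (Euc nθ)))
            ((x₀,θ₀) : Euc nx × Euc nθ) :=
          HasFDerivAt.prodMk (hS u hu n s hsIcc x₀ hx₀ θ₀ hθ₀) hasFDerivAt_snd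
        have houter := hf' (s+t₀) (vIter f t₀ u n ((x₀,θ₀) : Euc nx × Euc nθ) s) θ₀
        have hcomp := houter.comp ((x₀,θ₀) : Euc nx × Euc nθ) hinner
        rw [prod_snd_eq_Jm] at hcomp
        exact hcomp
      obtain ⟨-, hder⟩ := intervalIntegral.hasFDerivAt_integral_of_dominated_loc_of_lip
        (ball_mem_nhds _ hε₀) h_meas h_int hF'meas h_lip intervalIntegrable_const h_diff
      have hsum : HasFDerivAt (fun p : Euc nx × Euc nθ =>
            p.1 + ∫ s in (0:ℝ)..t, f (s+t₀) (vIter f t₀ u n p s) p.2)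
          (ContinuousLinearMap.fst ℝ (Euc nx) (Euc nθ)
            + ∫ s in (0:ℝ)..t,
                (f' (s+t₀) (vIter f t₀ u n ((x₀,θ₀) : Euc nx × Euc nθ) s) θ₀).comp
                  (Jm (S u n s ((x₀,θ₀) : Euc nx × Euc nθ))))
          ((x₀,θ₀) : Euc nx × Euc nθ) :=
        hasFDerivAt_fst.add hder
      have hSd := hS u hu (n+1) t ht x₀ hx₀ θ₀ hθ₀
      have hfun : (fun p : Euc nx × Euc nθ => (picard f t₀ p.1 p.2)^[n+1] u t)
          = fun p : Euc nx × Euc nθ =>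
              p.1 + ∫ s in (0:ℝ)..t, f (s+t₀) (vIter f t₀ u n p s) p.2 := by
        funext p
        have h1 : (picard f t₀ p.1 p.2)^[n+1] u t = vIter f t₀ u (n+1) p t := rfl
        rw [h1, vIter_succ]
      rw [hfun] at hSd
      exact hSd.unique hsum
    -- the induction
    intro n
    induction n with
    | zero =>
      refine ⟨?_, ?_, ?_, ?_, ?_, ?_, ?_⟩
      · intro x₀ _ θ₀ _ p _ s hs
        simpa [vIter_zero] using hu.2 s hs
      · intro x₀ _ θ₀ _ p _ q _ s _
        simp [vIter_zero, CsSeq]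
      · intro x₀ hx₀ θ₀ hθ₀
        exact continuousOn_const.congr fun s hs => S0 s hs x₀ hx₀ θ₀ hθ₀
      · intro x₀ hx₀ θ₀ hθ₀ s hs
        rw [S0 s hs x₀ hx₀ θ₀ hθ₀]
        simpa using hCb0.le
      · intro x₁ _ θ₁ _ x₂ _ θ₂ _ s _
        simp only [vIter_zero, sub_self, norm_zero]
        positivity
      · intro x₁ hx₁ θ₁ hθ₁ x₂ hx₂ θ₂ hθ₂ s hs
        rw [S0 s hs x₁ hx₁ θ₁ hθ₁, S0 s hs x₂ hx₂ θ₂ hθ₂]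
        simp only [sub_self, norm_zero]
        positivity
      · intro h0; exact absurd rfl h0
    | succ n ih =>
      obtain ⟨ih1, ih2, ih3, ih4, ih5, ih6, ih7⟩ := ih
      have hCsn := CsSeq_nonneg hT.le hL0 n
      have hrec : ∀ x₀, ∀ hx₀ : x₀ ∈ X, ∀ θ₀, ∀ hθ₀ : θ₀ ∈ Θ, ∀ t ∈ Icc (0:ℝ) T,
          S u (n+1) t ((x₀,θ₀) : Euc nx × Euc nθ) = ContinuousLinearMap.fst ℝ (Euc nx) (Euc nθ)
            + ∫ s in (0:ℝ)..t,
                (f' (s+t₀) (vIter f t₀ u n ((x₀,θ₀) : Euc nx × Euc nθ) s) θ₀).comp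
                  (Jm (S u n s ((x₀,θ₀) : Euc nx × Euc nθ))) :=
        fun x₀ hx₀ θ₀ hθ₀ => recS n (CsSeq T L n) hCsn x₀ hx₀ θ₀ hθ₀
          (ih1 x₀ hx₀ θ₀ hθ₀) (ih2 x₀ hx₀ θ₀ hθ₀) (ih3 x₀ hx₀ θ₀ hθ₀)
      -- pointwise bound on the derivative integrand
      have hF'b : ∀ x₀, ∀ hx₀ : x₀ ∈ X, ∀ θ₀, ∀ hθ₀ : θ₀ ∈ Θ, ∀ τ ∈ Icc (0:ℝ) T,
          ‖(f' (τ+t₀) (vIter f t₀ u n ((x₀,θ₀) : Euc nx × Euc nθ) τ) θ₀).comp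
            (Jm (S u n τ ((x₀,θ₀) : Euc nx × Euc nθ)))‖ ≤ Kx * Cb + L := by
        intro x₀ hx₀ θ₀ hθ₀ τ hτ
        have hyb : vIter f t₀ u n ((x₀,θ₀) : Euc nx × Euc nθ) τ ∈ closedBall (0 : Euc nx) a := by
          simp only [mem_closedBall, dist_zero_right]
          exact ih1 x₀ hx₀ θ₀ hθ₀ _ (mem_ball_self hε₀) τ hτ
        have hA : ‖f' (τ+t₀) (vIter f t₀ u n ((x₀,θ₀) : Euc nx × Euc nθ) τ) θ₀‖ ≤ L :=
          hL (τ+t₀) (hshift τ hτ) _ hyb θ₀ (hΘR θ₀ hθ₀)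
        refine (comp_Jm_norm_le _ _).trans ?_
        have hinl : ‖(f' (τ+t₀) (vIter f t₀ u n ((x₀,θ₀) : Euc nx × Euc nθ) τ) θ₀).comp
            (ContinuousLinearMap.inl ℝ (Euc nx) (Euc nθ))‖ * ‖S u n τ ((x₀,θ₀) : Euc nx × Euc nθ)‖
            ≤ Kx * Cb := by
          rcases Nat.eq_zero_or_pos n with rfl | hn
          · rw [S0 τ hτ x₀ hx₀ θ₀ hθ₀]
            simp only [norm_zero, mul_zero]
            positivity
          · have hint : ‖vIter f t₀ u n ((x₀,θ₀) : Euc nx × Euc nθ) τ‖ < a := by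
              have := ih7 hn.ne' x₀ hx₀ θ₀ hθ₀ τ hτ
              linarith
            have h1 := hf'xle (τ+t₀) (hshiftΓ τ hτ) θ₀ hθ₀ _ hint
            have h2 := ih4 x₀ hx₀ θ₀ hθ₀ τ hτ
            exact mul_le_mul h1 h2 (norm_nonneg _) hKx0
        linarith
      refine ⟨?_, ?_, ?_, ?_, ?_, ?_, ?_⟩
      -- P1 : uniform bound on the ball
      · intro x₀ hx₀ θ₀ hθ₀ p hp s hs
        have he : vIter f t₀ u (n+1) p s
            = p.1 + ∫ τ in (0:ℝ)..s, f (τ+t₀) (vIter f t₀ u n p τ) p.2 := by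
          rw [vIter_succ]
        rw [he]
        have hbx := hballx x₀ hx₀ θ₀ p hp
        have hbound : ∀ τ ∈ Icc (0:ℝ) T, ‖f (τ+t₀) (vIter f t₀ u n p τ) p.2‖ ≤ M + L*ε₀ := by
          intro τ hτ
          have hyb : vIter f t₀ u n p τ ∈ closedBall (0 : Euc nx) a := by
            simp only [mem_closedBall, dist_zero_right]
            exact ih1 x₀ hx₀ θ₀ hθ₀ p hp τ hτ
          have h1 := fLip (τ+t₀) (hshift τ hτ) _ hyb _ hyb
            p.2 (hballθ x₀ θ₀ hθ₀ p hp) θ₀ (hΘR θ₀ hθ₀)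
          have h2 := hM (τ+t₀) (hshiftΓ τ hτ) θ₀ hθ₀ _ hyb
          have h3 : ‖p.2 - θ₀‖ ≤ ε₀ := by
            have h4 : ‖p - ((x₀,θ₀) : Euc nx × Euc nθ)‖ < ε₀ := by
              rwa [mem_ball, dist_eq_norm] at hp
            have h5 := norm_snd_le (p - ((x₀,θ₀) : Euc nx × Euc nθ))
            rw [Prod.snd_sub] at h5
            exact h5.trans h4.le
          have h6 : ‖vIter f t₀ u n p τ - vIter f t₀ u n p τ‖ = 0 := by
            simp
          calc ‖f (τ+t₀) (vIter f t₀ u n p τ) p.2‖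
              = ‖(f (τ+t₀) (vIter f t₀ u n p τ) p.2 - f (τ+t₀) (vIter f t₀ u n p τ) θ₀)
                  + f (τ+t₀) (vIter f t₀ u n p τ) θ₀‖ := by rw [sub_add_cancel]
            _ ≤ ‖f (τ+t₀) (vIter f t₀ u n p τ) p.2 - f (τ+t₀) (vIter f t₀ u n p τ) θ₀‖
                  + ‖f (τ+t₀) (vIter f t₀ u n p τ) θ₀‖ := norm_add_le _ _
            _ ≤ L * (‖vIter f t₀ u n p τ - vIter f t₀ u n p τ‖ + ‖p.2 - θ₀‖) + M :=
                  add_le_add h1 h2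
            _ ≤ M + L*ε₀ := by
                  rw [h6, zero_add]
                  have := mul_le_mul_of_nonneg_left h3 hL0
                  linarith
        refine (norm_add_le _ _).trans ?_
        have hI := norm_intervalIntegral_le hs (by positivity) hbound
        have h7 : (M + L*ε₀)*T = T*M + ε₀*(T*L) := by ring
        have h8 : ε₀*(1+T*L) = ε₀ + ε₀*(T*L) := by ring
        have h9 : r' = a/2 - T*M := hr'def
        linarith [hε₀r]
      -- P2 : local Lipschitz continuity of the iterates
      · intro x₀ hx₀ θ₀ hθ₀ p hp q hq s hs
        have hep : vIter f t₀ u (n+1) p s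
            = p.1 + ∫ τ in (0:ℝ)..s, f (τ+t₀) (vIter f t₀ u n p τ) p.2 := by rw [vIter_succ]
        have heq : vIter f t₀ u (n+1) q s
            = q.1 + ∫ τ in (0:ℝ)..s, f (τ+t₀) (vIter f t₀ u n q τ) q.2 := by rw [vIter_succ]
        rw [hep, heq]
        have hintp : IntervalIntegrable (fun τ => f (τ+t₀) (vIter f t₀ u n p τ) p.2)
            volume 0 s := ((contg _ p.2 (hv_cont n p)).mono (hIccsub s hs)).intervalIntegrable
        have hintq : IntervalIntegrable (fun τ => f (τ+t₀) (vIter f t₀ u n q τ) q.2)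
            volume 0 s := ((contg _ q.2 (hv_cont n q)).mono (hIccsub s hs)).intervalIntegrable
        have hre : p.1 + (∫ τ in (0:ℝ)..s, f (τ+t₀) (vIter f t₀ u n p τ) p.2)
            - (q.1 + ∫ τ in (0:ℝ)..s, f (τ+t₀) (vIter f t₀ u n q τ) q.2)
            = (p.1 - q.1) + ∫ τ in (0:ℝ)..s,
                (f (τ+t₀) (vIter f t₀ u n p τ) p.2 - f (τ+t₀) (vIter f t₀ u n q τ) q.2) := by
          rw [intervalIntegral.integral_sub hintp hintq]
          abel
        rw [hre]
        have hbound : ∀ τ ∈ Icc (0:ℝ) T,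
            ‖f (τ+t₀) (vIter f t₀ u n p τ) p.2 - f (τ+t₀) (vIter f t₀ u n q τ) q.2‖
              ≤ L * (CsSeq T L n + 1) * ‖p - q‖ := by
          intro τ hτ
          have hyp : vIter f t₀ u n p τ ∈ closedBall (0 : Euc nx) a := by
            simp only [mem_closedBall, dist_zero_right]
            exact ih1 x₀ hx₀ θ₀ hθ₀ p hp τ hτ
          have hyq : vIter f t₀ u n q τ ∈ closedBall (0 : Euc nx) a := by
            simp only [mem_closedBall, dist_zero_right]
            exact ih1 x₀ hx₀ θ₀ hθ₀ q hq τ hτ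
          have h1 := fLip (τ+t₀) (hshift τ hτ) _ hyp _ hyq
            p.2 (hballθ x₀ θ₀ hθ₀ p hp) q.2 (hballθ x₀ θ₀ hθ₀ q hq)
          have h2 := ih2 x₀ hx₀ θ₀ hθ₀ p hp q hq τ hτ
          have h3 : ‖p.2 - q.2‖ ≤ ‖p - q‖ := by
            have := norm_snd_le (p - q); rwa [Prod.snd_sub] at this
          calc ‖f (τ+t₀) (vIter f t₀ u n p τ) p.2 - f (τ+t₀) (vIter f t₀ u n q τ) q.2‖
              ≤ L * (‖vIter f t₀ u n p τ - vIter f t₀ u n q τ‖ + ‖p.2 - q.2‖) := h1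
            _ ≤ L * (CsSeq T L n * ‖p - q‖ + ‖p - q‖) :=
                mul_le_mul_of_nonneg_left (add_le_add h2 h3) hL0
            _ = L * (CsSeq T L n + 1) * ‖p - q‖ := by ring
        refine (norm_add_le _ _).trans ?_
        have hI := norm_intervalIntegral_le hs (by positivity) hbound
        have h4 : ‖p.1 - q.1‖ ≤ ‖p - q‖ := by
          have := norm_fst_le (p - q); rwa [Prod.fst_sub] at this
        have h5 : CsSeq T L (n+1) = 1 + T*L*(CsSeq T L n + 1) := rfl
        have h6 : L * (CsSeq T L n + 1) * ‖p - q‖ * T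
            = (T*L*(CsSeq T L n + 1)) * ‖p - q‖ := by ring
        rw [h5]
        have h7 : (1 + T*L*(CsSeq T L n + 1)) * ‖p - q‖
            = ‖p - q‖ + (T*L*(CsSeq T L n+1)) * ‖p - q‖ := by ring
        linarith
      -- P3 : continuity in `s` of `S u (n+1) s`
      · intro x₀ hx₀ θ₀ hθ₀
        have hc : ContinuousOn (fun s => ContinuousLinearMap.fst ℝ (Euc nx) (Euc nθ)
            + ∫ τ in (0:ℝ)..s,
                (f' (τ+t₀) (vIter f t₀ u n ((x₀,θ₀) : Euc nx × Euc nθ) τ) θ₀).comp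
                  (Jm (S u n τ ((x₀,θ₀) : Euc nx × Euc nθ)))) (Icc (0:ℝ) T) :=
          continuousOn_const.add (contOn_primitive hT.le
            (contF' n x₀ hx₀ θ₀ hθ₀ (ih3 x₀ hx₀ θ₀ hθ₀)))
        exact hc.congr fun s hs => hrec x₀ hx₀ θ₀ hθ₀ s hs
      -- P4 : uniform bound on `S u (n+1)`
      · intro x₀ hx₀ θ₀ hθ₀ s hs
        rw [hrec x₀ hx₀ θ₀ hθ₀ s hs]
        refine (norm_add_le _ _).trans ?_
        have h1 : ‖ContinuousLinearMap.fst ℝ (Euc nx) (Euc nθ)‖ ≤ 1 := by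
          refine ContinuousLinearMap.opNorm_le_bound _ zero_le_one fun p => ?_
          rw [one_mul]
          exact norm_fst_le p
        have hI := norm_intervalIntegral_le hs (by positivity) (hF'b x₀ hx₀ θ₀ hθ₀)
        have h2 : (Kx*Cb + L)*T = T*Kx*Cb + T*L := by ring
        have h3 : Cb * (1 - T*Kx) = 1 + T*L := hCbeq
        have h4 : Cb*(1-T*Kx) = Cb - T*Kx*Cb := by ring
        linarith
      -- P5 : global Lipschitz continuity of the iterates on `X × Θ`
      · intro x₁ hx₁ θ₁ hθ₁ x₂ hx₂ θ₂ hθ₂ s hs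
        have hep : vIter f t₀ u (n+1) ((x₁,θ₁) : Euc nx × Euc nθ) s
            = x₁ + ∫ τ in (0:ℝ)..s,
                f (τ+t₀) (vIter f t₀ u n ((x₁,θ₁) : Euc nx × Euc nθ) τ) θ₁ := by
          rw [vIter_succ]
        have heq : vIter f t₀ u (n+1) ((x₂,θ₂) : Euc nx × Euc nθ) s
            = x₂ + ∫ τ in (0:ℝ)..s,
                f (τ+t₀) (vIter f t₀ u n ((x₂,θ₂) : Euc nx × Euc nθ) τ) θ₂ := by
          rw [vIter_succ]
        rw [hep, heq]
        have hint1 : IntervalIntegrable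
            (fun τ => f (τ+t₀) (vIter f t₀ u n ((x₁,θ₁) : Euc nx × Euc nθ) τ) θ₁)
            volume 0 s := ((contg _ θ₁ (hv_cont n _)).mono (hIccsub s hs)).intervalIntegrable
        have hint2 : IntervalIntegrable
            (fun τ => f (τ+t₀) (vIter f t₀ u n ((x₂,θ₂) : Euc nx × Euc nθ) τ) θ₂)
            volume 0 s := ((contg _ θ₂ (hv_cont n _)).mono (hIccsub s hs)).intervalIntegrable
        have hre : x₁ + (∫ τ in (0:ℝ)..s,
              f (τ+t₀) (vIter f t₀ u n ((x₁,θ₁) : Euc nx × Euc nθ) τ) θ₁)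
            - (x₂ + ∫ τ in (0:ℝ)..s,
              f (τ+t₀) (vIter f t₀ u n ((x₂,θ₂) : Euc nx × Euc nθ) τ) θ₂)
            = (x₁ - x₂) + ∫ τ in (0:ℝ)..s,
                (f (τ+t₀) (vIter f t₀ u n ((x₁,θ₁) : Euc nx × Euc nθ) τ) θ₁
                  - f (τ+t₀) (vIter f t₀ u n ((x₂,θ₂) : Euc nx × Euc nθ) τ) θ₂) := by
          rw [intervalIntegral.integral_sub hint1 hint2]
          abel
        rw [hre]
        have hbound : ∀ τ ∈ Icc (0:ℝ) T,
            ‖f (τ+t₀) (vIter f t₀ u n ((x₁,θ₁) : Euc nx × Euc nθ) τ) θ₁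
              - f (τ+t₀) (vIter f t₀ u n ((x₂,θ₂) : Euc nx × Euc nθ) τ) θ₂‖
              ≤ (L + Kx*Cb) * ‖((x₁,θ₁) : Euc nx × Euc nθ) - (x₂,θ₂)‖ := by
          intro τ hτ
          have hy1 : vIter f t₀ u n ((x₁,θ₁) : Euc nx × Euc nθ) τ
              ∈ closedBall (0 : Euc nx) a := by
            simp only [mem_closedBall, dist_zero_right]
            exact ih1 x₁ hx₁ θ₁ hθ₁ _ (mem_ball_self hε₀) τ hτ
          have hy2 : vIter f t₀ u n ((x₂,θ₂) : Euc nx × Euc nθ) τ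
              ∈ closedBall (0 : Euc nx) a := by
            simp only [mem_closedBall, dist_zero_right]
            exact ih1 x₂ hx₂ θ₂ hθ₂ _ (mem_ball_self hε₀) τ hτ
          have h1 := fLip (τ+t₀) (hshift τ hτ) _ hy1 _ hy1 θ₁ (hΘR θ₁ hθ₁) θ₂ (hΘR θ₂ hθ₂)
          have h2 := hKx (τ+t₀) (hshiftΓ τ hτ) θ₂ hθ₂ _ hy1 _ hy2
          have h3 := ih5 x₁ hx₁ θ₁ hθ₁ x₂ hx₂ θ₂ hθ₂ τ hτ
          have h4 : ‖θ₁ - θ₂‖ ≤ ‖((x₁,θ₁) : Euc nx × Euc nθ) - (x₂,θ₂)‖ := by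
            have := norm_snd_le (((x₁,θ₁) : Euc nx × Euc nθ) - (x₂,θ₂))
            rwa [Prod.snd_sub] at this
          have h0 : ‖vIter f t₀ u n ((x₁,θ₁) : Euc nx × Euc nθ) τ
              - vIter f t₀ u n ((x₁,θ₁) : Euc nx × Euc nθ) τ‖ = 0 := by simp
          calc ‖f (τ+t₀) (vIter f t₀ u n ((x₁,θ₁) : Euc nx × Euc nθ) τ) θ₁
                - f (τ+t₀) (vIter f t₀ u n ((x₂,θ₂) : Euc nx × Euc nθ) τ) θ₂‖
              = ‖(f (τ+t₀) (vIter f t₀ u n ((x₁,θ₁) : Euc nx × Euc nθ) τ) θ₁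
                  - f (τ+t₀) (vIter f t₀ u n ((x₁,θ₁) : Euc nx × Euc nθ) τ) θ₂)
                + (f (τ+t₀) (vIter f t₀ u n ((x₁,θ₁) : Euc nx × Euc nθ) τ) θ₂
                  - f (τ+t₀) (vIter f t₀ u n ((x₂,θ₂) : Euc nx × Euc nθ) τ) θ₂)‖ := by
                abel_nf
            _ ≤ ‖f (τ+t₀) (vIter f t₀ u n ((x₁,θ₁) : Euc nx × Euc nθ) τ) θ₁
                  - f (τ+t₀) (vIter f t₀ u n ((x₁,θ₁) : Euc nx × Euc nθ) τ) θ₂‖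
                + ‖f (τ+t₀) (vIter f t₀ u n ((x₁,θ₁) : Euc nx × Euc nθ) τ) θ₂
                  - f (τ+t₀) (vIter f t₀ u n ((x₂,θ₂) : Euc nx × Euc nθ) τ) θ₂‖ :=
                norm_add_le _ _
            _ ≤ (L + Kx*Cb) * ‖((x₁,θ₁) : Euc nx × Euc nθ) - (x₂,θ₂)‖ := by
                have e1 : L * (‖vIter f t₀ u n ((x₁,θ₁) : Euc nx × Euc nθ) τ
                    - vIter f t₀ u n ((x₁,θ₁) : Euc nx × Euc nθ) τ‖ + ‖θ₁ - θ₂‖)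
                    ≤ L * ‖((x₁,θ₁) : Euc nx × Euc nθ) - (x₂,θ₂)‖ := by
                  rw [h0, zero_add]
                  exact mul_le_mul_of_nonneg_left h4 hL0
                have e2 : Kx * ‖vIter f t₀ u n ((x₁,θ₁) : Euc nx × Euc nθ) τ
                    - vIter f t₀ u n ((x₂,θ₂) : Euc nx × Euc nθ) τ‖
                    ≤ Kx * (Cb * ‖((x₁,θ₁) : Euc nx × Euc nθ) - (x₂,θ₂)‖) :=
                  mul_le_mul_of_nonneg_left h3 hKx0
                have := h1.trans e1
                have := h2.trans e2
                nlinarith [norm_nonneg (((x₁,θ₁) : Euc nx × Euc nθ) - (x₂,θ₂))]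
        refine (norm_add_le _ _).trans ?_
        have hI := norm_intervalIntegral_le hs (by positivity) hbound
        have h4 : ‖x₁ - x₂‖ ≤ ‖((x₁,θ₁) : Euc nx × Euc nθ) - (x₂,θ₂)‖ := by
          have := norm_fst_le (((x₁,θ₁) : Euc nx × Euc nθ) - (x₂,θ₂))
          rwa [Prod.fst_sub] at this
        have h5 : (L + Kx*Cb) * ‖((x₁,θ₁) : Euc nx × Euc nθ) - (x₂,θ₂)‖ * T
            = (T*L + T*Kx*Cb) * ‖((x₁,θ₁) : Euc nx × Euc nθ) - (x₂,θ₂)‖ := by ring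
        have h6 : Cb * (1 - T*Kx) = 1 + T*L := hCbeq
        have h7 : Cb * ‖((x₁,θ₁) : Euc nx × Euc nθ) - (x₂,θ₂)‖
            = (1 + T*L + T*Kx*Cb) * ‖((x₁,θ₁) : Euc nx × Euc nθ) - (x₂,θ₂)‖ := by
          have : Cb = 1 + T*L + T*Kx*Cb := by nlinarith [h6]
          rw [← this]
        nlinarith [norm_nonneg (((x₁,θ₁) : Euc nx × Euc nθ) - (x₂,θ₂))]
      -- P6 : Lipschitz continuity of `S u (n+1)` in the parameters
      · intro x₁ hx₁ θ₁ hθ₁ x₂ hx₂ θ₂ hθ₂ s hs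
        rw [hrec x₁ hx₁ θ₁ hθ₁ s hs, hrec x₂ hx₂ θ₂ hθ₂ s hs]
        have hint1 : IntervalIntegrable (fun τ =>
            (f' (τ+t₀) (vIter f t₀ u n ((x₁,θ₁) : Euc nx × Euc nθ) τ) θ₁).comp
              (Jm (S u n τ ((x₁,θ₁) : Euc nx × Euc nθ)))) volume 0 s :=
          ((contF' n x₁ hx₁ θ₁ hθ₁ (ih3 x₁ hx₁ θ₁ hθ₁)).mono (hIccsub s hs)).intervalIntegrable
        have hint2 : IntervalIntegrable (fun τ =>
            (f' (τ+t₀) (vIter f t₀ u n ((x₂,θ₂) : Euc nx × Euc nθ) τ) θ₂).comp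
              (Jm (S u n τ ((x₂,θ₂) : Euc nx × Euc nθ)))) volume 0 s :=
          ((contF' n x₂ hx₂ θ₂ hθ₂ (ih3 x₂ hx₂ θ₂ hθ₂)).mono (hIccsub s hs)).intervalIntegrable
        have hre : (ContinuousLinearMap.fst ℝ (Euc nx) (Euc nθ)
              + ∫ τ in (0:ℝ)..s,
                  (f' (τ+t₀) (vIter f t₀ u n ((x₁,θ₁) : Euc nx × Euc nθ) τ) θ₁).comp
                    (Jm (S u n τ ((x₁,θ₁) : Euc nx × Euc nθ))))
            - (ContinuousLinearMap.fst ℝ (Euc nx) (Euc nθ)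
              + ∫ τ in (0:ℝ)..s,
                  (f' (τ+t₀) (vIter f t₀ u n ((x₂,θ₂) : Euc nx × Euc nθ) τ) θ₂).comp
                    (Jm (S u n τ ((x₂,θ₂) : Euc nx × Euc nθ))))
            = ∫ τ in (0:ℝ)..s,
                ((f' (τ+t₀) (vIter f t₀ u n ((x₁,θ₁) : Euc nx × Euc nθ) τ) θ₁).comp
                    (Jm (S u n τ ((x₁,θ₁) : Euc nx × Euc nθ)))
                  - (f' (τ+t₀) (vIter f t₀ u n ((x₂,θ₂) : Euc nx × Euc nθ) τ) θ₂).comp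
                    (Jm (S u n τ ((x₂,θ₂) : Euc nx × Euc nθ)))) := by
          rw [intervalIntegral.integral_sub hint1 hint2]
          abel
        rw [hre]
        have hbound : ∀ τ ∈ Icc (0:ℝ) T,
            ‖(f' (τ+t₀) (vIter f t₀ u n ((x₁,θ₁) : Euc nx × Euc nθ) τ) θ₁).comp
                (Jm (S u n τ ((x₁,θ₁) : Euc nx × Euc nθ)))
              - (f' (τ+t₀) (vIter f t₀ u n ((x₂,θ₂) : Euc nx × Euc nθ) τ) θ₂).comp
                (Jm (S u n τ ((x₂,θ₂) : Euc nx × Euc nθ)))‖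
            ≤ (Kf'*((Cb+1)*(Cb+1)) + Kx*K₀) * ‖((x₁,θ₁) : Euc nx × Euc nθ) - (x₂,θ₂)‖ := by
          intro τ hτ
          have hy1 : vIter f t₀ u n ((x₁,θ₁) : Euc nx × Euc nθ) τ
              ∈ closedBall (0 : Euc nx) a := by
            simp only [mem_closedBall, dist_zero_right]
            exact ih1 x₁ hx₁ θ₁ hθ₁ _ (mem_ball_self hε₀) τ hτ
          have hy2 : vIter f t₀ u n ((x₂,θ₂) : Euc nx × Euc nθ) τ
              ∈ closedBall (0 : Euc nx) a := by
            simp only [mem_closedBall, dist_zero_right]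
            exact ih1 x₂ hx₂ θ₂ hθ₂ _ (mem_ball_self hε₀) τ hτ
          have hsplit : (f' (τ+t₀) (vIter f t₀ u n ((x₁,θ₁) : Euc nx × Euc nθ) τ) θ₁).comp
                (Jm (S u n τ ((x₁,θ₁) : Euc nx × Euc nθ)))
              - (f' (τ+t₀) (vIter f t₀ u n ((x₂,θ₂) : Euc nx × Euc nθ) τ) θ₂).comp
                (Jm (S u n τ ((x₂,θ₂) : Euc nx × Euc nθ)))
              = ((f' (τ+t₀) (vIter f t₀ u n ((x₁,θ₁) : Euc nx × Euc nθ) τ) θ₁)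
                  - (f' (τ+t₀) (vIter f t₀ u n ((x₂,θ₂) : Euc nx × Euc nθ) τ) θ₂)).comp
                    (Jm (S u n τ ((x₁,θ₁) : Euc nx × Euc nθ)))
                + ((f' (τ+t₀) (vIter f t₀ u n ((x₂,θ₂) : Euc nx × Euc nθ) τ) θ₂).comp
                    (ContinuousLinearMap.inl ℝ (Euc nx) (Euc nθ))).comp
                      (S u n τ ((x₁,θ₁) : Euc nx × Euc nθ)
                        - S u n τ ((x₂,θ₂) : Euc nx × Euc nθ)) := by
            rw [ContinuousLinearMap.sub_comp, ContinuousLinearMap.comp_assoc, ← Jm_sub,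
              ContinuousLinearMap.comp_sub]
            abel
          rw [hsplit]
          refine (norm_add_le _ _).trans ?_
          -- first term
          have hA12 := hf'lipK (τ+t₀) (hshiftΓ τ hτ) _ hy1 _ hy2 θ₁ hθ₁ θ₂ hθ₂
          have hJm1 : ‖Jm (S u n τ ((x₁,θ₁) : Euc nx × Euc nθ))‖ ≤ Cb + 1 :=
            (Jm_norm_le _).trans (add_le_add (ih4 x₁ hx₁ θ₁ hθ₁ τ hτ) le_rfl)
          have hvlip := ih5 x₁ hx₁ θ₁ hθ₁ x₂ hx₂ θ₂ hθ₂ τ hτ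
          have hθlip : ‖θ₁ - θ₂‖ ≤ ‖((x₁,θ₁) : Euc nx × Euc nθ) - (x₂,θ₂)‖ := by
            have := norm_snd_le (((x₁,θ₁) : Euc nx × Euc nθ) - (x₂,θ₂))
            rwa [Prod.snd_sub] at this
          have ht1 : ‖((f' (τ+t₀) (vIter f t₀ u n ((x₁,θ₁) : Euc nx × Euc nθ) τ) θ₁)
                  - (f' (τ+t₀) (vIter f t₀ u n ((x₂,θ₂) : Euc nx × Euc nθ) τ) θ₂)).comp
                    (Jm (S u n τ ((x₁,θ₁) : Euc nx × Euc nθ)))‖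
              ≤ (Kf' * ((Cb+1) * ‖((x₁,θ₁) : Euc nx × Euc nθ) - (x₂,θ₂)‖)) * (Cb+1) := by
            refine (ContinuousLinearMap.opNorm_comp_le _ _).trans ?_
            have h1 : ‖(f' (τ+t₀) (vIter f t₀ u n ((x₁,θ₁) : Euc nx × Euc nθ) τ) θ₁)
                  - (f' (τ+t₀) (vIter f t₀ u n ((x₂,θ₂) : Euc nx × Euc nθ) τ) θ₂)‖
                ≤ Kf' * ((Cb+1) * ‖((x₁,θ₁) : Euc nx × Euc nθ) - (x₂,θ₂)‖) := by
              refine hA12.trans ?_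
              refine mul_le_mul_of_nonneg_left ?_ hKf'0
              have hn := norm_nonneg (((x₁,θ₁) : Euc nx × Euc nθ) - (x₂,θ₂))
              nlinarith [hvlip, hθlip]
            exact mul_le_mul h1 hJm1 (norm_nonneg _) (by positivity)
          -- second term
          have ht2 : ‖((f' (τ+t₀) (vIter f t₀ u n ((x₂,θ₂) : Euc nx × Euc nθ) τ) θ₂).comp
                    (ContinuousLinearMap.inl ℝ (Euc nx) (Euc nθ))).comp
                      (S u n τ ((x₁,θ₁) : Euc nx × Euc nθ)
                        - S u n τ ((x₂,θ₂) : Euc nx × Euc nθ))‖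
              ≤ Kx * (K₀ * ‖((x₁,θ₁) : Euc nx × Euc nθ) - (x₂,θ₂)‖) := by
            rcases Nat.eq_zero_or_pos n with rfl | hn
            · rw [S0 τ hτ x₁ hx₁ θ₁ hθ₁, S0 τ hτ x₂ hx₂ θ₂ hθ₂]
              simp only [sub_self, ContinuousLinearMap.comp_zero, norm_zero]
              positivity
            · refine (ContinuousLinearMap.opNorm_comp_le _ _).trans ?_
              have hint : ‖vIter f t₀ u n ((x₂,θ₂) : Euc nx × Euc nθ) τ‖ < a := by
                have := ih7 hn.ne' x₂ hx₂ θ₂ hθ₂ τ hτ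
                linarith
              have h1 := hf'xle (τ+t₀) (hshiftΓ τ hτ) θ₂ hθ₂ _ hint
              have h2 := ih6 x₁ hx₁ θ₁ hθ₁ x₂ hx₂ θ₂ hθ₂ τ hτ
              exact mul_le_mul h1 h2 (norm_nonneg _) hKx0
          have hn := norm_nonneg (((x₁,θ₁) : Euc nx × Euc nθ) - (x₂,θ₂))
          nlinarith [ht1, ht2]
        have hD0 : 0 ≤ (Kf'*((Cb+1)*(Cb+1)) + Kx*K₀) :=
          add_nonneg (mul_nonneg hKf'0 (mul_nonneg (by linarith) (by linarith)))
            (mul_nonneg hKx0 hK₀0)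
        refine (norm_intervalIntegral_le hs
          (mul_nonneg hD0 (norm_nonneg _)) hbound).trans ?_
        have heq2 : (Kf'*((Cb+1)*(Cb+1)) + Kx*K₀)
              * ‖((x₁,θ₁) : Euc nx × Euc nθ) - (x₂,θ₂)‖ * T
            = K₀ * ‖((x₁,θ₁) : Euc nx × Euc nθ) - (x₂,θ₂)‖
              - (K₀ * (1 - T*Kx) - T * Kf' * ((Cb+1)*(Cb+1)))
                * ‖((x₁,θ₁) : Euc nx × Euc nθ) - (x₂,θ₂)‖ := by ring
        rw [heq2, hK₀eq]
        simp
      -- P7 : interior bound at centre points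
      · intro _ x₀ hx₀ θ₀ hθ₀ s hs
        have he : vIter f t₀ u (n+1) ((x₀,θ₀) : Euc nx × Euc nθ) s
            = x₀ + ∫ τ in (0:ℝ)..s,
                f (τ+t₀) (vIter f t₀ u n ((x₀,θ₀) : Euc nx × Euc nθ) τ) θ₀ := by
          rw [vIter_succ]
        rw [he]
        have hbound : ∀ τ ∈ Icc (0:ℝ) T,
            ‖f (τ+t₀) (vIter f t₀ u n ((x₀,θ₀) : Euc nx × Euc nθ) τ) θ₀‖ ≤ M := by
          intro τ hτ
          have hyb : vIter f t₀ u n ((x₀,θ₀) : Euc nx × Euc nθ) τ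
              ∈ closedBall (0 : Euc nx) a := by
            simp only [mem_closedBall, dist_zero_right]
            exact ih1 x₀ hx₀ θ₀ hθ₀ _ (mem_ball_self hε₀) τ hτ
          exact hM (τ+t₀) (hshiftΓ τ hτ) θ₀ hθ₀ _ hyb
        refine (norm_add_le _ _).trans ?_
        have hI := norm_intervalIntegral_le hs hM0 hbound
        have := ha x₀ hx₀
        have hMT : M * T = T * M := by ring
        linarith
  refine ⟨K₀ + 1, by linarith, ?_⟩
  intro n x₁ hx₁ x₂ hx₂ θ₁ hθ₁ θ₂ hθ₂ u hu t ht
  obtain ⟨-, -, -, -, -, hP6, -⟩ := key u hu n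
  have h1 := hP6 x₁ hx₁ θ₁ hθ₁ x₂ hx₂ θ₂ hθ₂ t ht
  have hnorm : ‖((x₁,θ₁) : Euc nx × Euc nθ) - (x₂,θ₂)‖ ≤ ‖x₁ - x₂‖ + ‖θ₁ - θ₂‖ := by
    rw [Prod.mk_sub_mk, Prod.norm_def]
    exact max_le (by linarith [norm_nonneg (θ₁ - θ₂)]) (by linarith [norm_nonneg (x₁ - x₂)])
  have h2 : K₀ * ‖((x₁,θ₁) : Euc nx × Euc nθ) - (x₂,θ₂)‖ ≤ K₀ * (‖x₁ - x₂‖ + ‖θ₁ - θ₂‖) :=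
    mul_le_mul_of_nonneg_left hnorm hK₀0
  have h3 := norm_nonneg (x₁ - x₂)
  have h4 := norm_nonneg (θ₁ - θ₂)
  calc ‖S u n t (x₁,θ₁) - S u n t (x₂,θ₂)‖ ≤ K₀ * ‖((x₁,θ₁) : Euc nx × Euc nθ) - (x₂,θ₂)‖ := h1
    _ ≤ K₀ * (‖x₁ - x₂‖ + ‖θ₁ - θ₂‖) := h2
    _ ≤ (K₀+1) * ‖x₁ - x₂‖ + (K₀+1) * ‖θ₁ - θ₂‖ := by nlinarith
end
end
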